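/- In particular, for u > 0 and g_u(x) = exp(−u x), every Walsh coefficient ĝ_u(k) = ∫_0^1 exp(−u x)·wal_k(x) dx is strictly positive. -/

import Mathlib

open MeasureTheory

/-- The `i`-th binary digit (for `i ≥ 1`) of `x ∈ [0,1)` in the expansion
`x = Σ_{i ≥ 1} x_i 2^{-i}` with infinitely many digits equal to `0`. -/
noncomputable def binDigit (x : ℝ) (i : ℕ) : ℕ := (⌊x * 2 ^ i⌋).toNat % 2

/-- The `k`-th dyadic Walsh function on `[0,1)`:
`wal_k(x) = (-1)^{Σ_{i ≥ 1} κ_i x_i}` where `k = Σ κ_i 2^{i-1}`. -/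
noncomputable def walsh (k : ℕ) (x : ℝ) : ℝ :=
  ∏ i ∈ Finset.range k.size, if k.testBit i then (-1 : ℝ) ^ binDigit x (i + 1) else 1

/-- The `k`-th dyadic Walsh coefficient of `f : [0,1) → ℝ`. -/
noncomputable def walshCoeff (f : ℝ → ℝ) (k : ℕ) : ℝ :=
  ∫ x in (0:ℝ)..1, f x * walsh k x

/-- `μ_u(k) = Σ_{i ≥ 1} (i + 1 - log₂ u) κ_i`, for the binary digits `κ_i` of `k`. -/
noncomputable def muWeight (u : ℝ) (k : ℕ) : ℝ :=
  ∑ i ∈ Finset.range k.size, if k.testBit i then ((i : ℝ) + 2 - Real.logb 2 u) else 0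

/-- `A_u = (1 - exp (-u)) / u`. -/
noncomputable def Aconst (u : ℝ) : ℝ := (1 - Real.exp (-u)) / u

/-- `B_u = inf_{w ≥ 1} ((1-exp(-2^{-w}u))/(2^{-w}u)) ∏_{i=1}^w (1-exp(-2^{-i}u))/(2^{-i}u)`. -/
noncomputable def Bconst (u : ℝ) : ℝ :=
  ⨅ w : {w : ℕ // 1 ≤ w},
    ((1 - Real.exp (-((2:ℝ) ^ (-((w:ℕ):ℤ)) * u))) / ((2:ℝ) ^ (-((w:ℕ):ℤ)) * u))
      * ∏ i ∈ Finset.Icc 1 (w : ℕ),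
          (1 - Real.exp (-((2:ℝ) ^ (-(i:ℤ)) * u))) / ((2:ℝ) ^ (-(i:ℤ)) * u)

/-!
Halving the interval: on `[0, 1/2)` the function `wal_k` is `wal_{⌊k/2⌋}(2x)`, and on
`[1/2, 1)` it is `(-1)^{κ_1} wal_{⌊k/2⌋}(2x - 1)`. Since
`exp (-u (y + 1) / 2) = exp (-u/2) exp (-u y / 2)`, this gives
`ĝ_u(k) = (1 + (-1)^{κ_1} exp (-u/2)) / 2 · ĝ_{u/2}(⌊k/2⌋)`, whose first factor is positive
because `exp (-u/2) < 1`. Induction on `k` ends at `ĝ_u(0) = ∫₀¹ exp (-u x) dx > 0`.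
-/

open Set intervalIntegral

lemma Nat.size_eq_size_div_two_add_one {k : ℕ} (hk : k ≠ 0) : k.size = (k / 2).size + 1 := by
  conv_lhs => rw [← Nat.bit_testBit_zero_shiftRight_one k]
  rw [Nat.size_bit (by rwa [Nat.bit_testBit_zero_shiftRight_one]), Nat.shiftRight_one]

lemma binDigit_div_two (y : ℝ) (i : ℕ) : binDigit (y / 2) (i + 1) = binDigit y i := by
  simp only [binDigit, pow_succ]
  congr 3
  ring

lemma binDigit_add_one {y : ℝ} (hy : 0 ≤ y) (i : ℕ) :
    binDigit (y + 1) (i + 1) = binDigit y (i + 1) := by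
  have hfloor : ⌊(y + 1) * 2 ^ (i + 1)⌋ = ⌊y * 2 ^ (i + 1)⌋ + 2 * 2 ^ i := by
    rw [← Int.floor_add_intCast]
    push_cast
    ring_nf
  have hnonneg : 0 ≤ ⌊y * 2 ^ (i + 1)⌋ := Int.floor_nonneg.2 (by positivity)
  have hpow : (0 : ℤ) ≤ 2 ^ i := by positivity
  simp only [binDigit, hfloor]
  omega

lemma binDigit_div_two_one {y : ℝ} (h0 : 0 ≤ y) (h1 : y < 1) : binDigit (y / 2) 1 = 0 := by
  rw [binDigit_div_two, binDigit, pow_zero, mul_one, Int.floor_eq_zero_iff.2 ⟨h0, h1⟩]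
  rfl

lemma binDigit_add_one_div_two_one {y : ℝ} (h0 : 0 ≤ y) (h1 : y < 1) :
    binDigit ((y + 1) / 2) 1 = 1 := by
  have hfloor : ⌊y + 1⌋ = 1 := by
    rw [Int.floor_eq_iff]
    constructor <;> push_cast <;> linarith
  rw [binDigit_div_two, binDigit, pow_zero, mul_one, hfloor]
  rfl

lemma walsh_zero (x : ℝ) : walsh 0 x = 1 := by
  simp [walsh]

lemma walsh_div_two {k : ℕ} {y : ℝ} (h0 : 0 ≤ y) (h1 : y < 1) :
    walsh k (y / 2) = walsh (k / 2) y := by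
  rcases eq_or_ne k 0 with rfl | hk
  · simp [walsh_zero]
  rw [walsh, Nat.size_eq_size_div_two_add_one hk, Finset.prod_range_succ', zero_add,
    binDigit_div_two_one h0 h1, pow_zero, ite_self, mul_one, walsh]
  refine Finset.prod_congr rfl fun i _ => ?_
  rw [Nat.testBit_succ, binDigit_div_two]

lemma walsh_add_one_div_two {k : ℕ} (hk : k ≠ 0) {y : ℝ} (h0 : 0 ≤ y) (h1 : y < 1) :
    walsh k ((y + 1) / 2) = (if k.testBit 0 then -1 else 1) * walsh (k / 2) y := by
  rw [walsh, Nat.size_eq_size_div_two_add_one hk, Finset.prod_range_succ', zero_add,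
    binDigit_add_one_div_two_one h0 h1, pow_one, mul_comm, walsh]
  congr 1
  refine Finset.prod_congr rfl fun i _ => ?_
  rw [Nat.testBit_succ, binDigit_div_two, binDigit_add_one h0]

lemma measurable_walsh (k : ℕ) : Measurable (walsh k) := by
  refine Finset.measurable_prod _ fun i _ => ?_
  split_ifs
  · exact (measurable_from_top (f := fun n : ℤ => (-1 : ℝ) ^ (n.toNat % 2))).comp
      (Int.measurable_floor.comp (measurable_id.mul_const _))
  · exact measurable_const

lemma abs_walsh_le_one (k : ℕ) (x : ℝ) : |walsh k x| ≤ 1 := by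
  rw [walsh, Finset.abs_prod]
  refine Finset.prod_le_one (fun _ _ => abs_nonneg _) fun i _ => ?_
  split_ifs <;> simp [abs_pow]

lemma IntervalIntegrable.mul_walsh {f : ℝ → ℝ} {a b : ℝ}
    (hf : IntervalIntegrable f volume a b) (k : ℕ) :
    IntervalIntegrable (fun x => f x * walsh k x) volume a b := by
  have hbound : ∀ μ : Measure ℝ, ∀ᵐ x ∂μ, ‖walsh k x‖ ≤ 1 :=
    fun _ => Filter.Eventually.of_forall (abs_walsh_le_one k)
  exact ⟨hf.1.mul_bdd (measurable_walsh k).aestronglyMeasurable (hbound _),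
    hf.2.mul_bdd (measurable_walsh k).aestronglyMeasurable (hbound _)⟩

lemma walshCoeff_eq_of_ne_zero {f : ℝ → ℝ} (hf : IntervalIntegrable f volume 0 1) {k : ℕ}
    (hk : k ≠ 0) :
    walshCoeff f k = (walshCoeff (fun y => f (y / 2)) (k / 2) +
      (if k.testBit 0 then -1 else 1) * walshCoeff (fun y => f ((y + 1) / 2)) (k / 2)) / 2 := by
  set g : ℝ → ℝ := fun x => f x * walsh k x
  have hg : IntervalIntegrable g volume 0 1 := hf.mul_walsh k
  have hsplit :
      walshCoeff f k = (∫ x in (0 : ℝ)..1 / 2, g x) + ∫ x in (1 / 2 : ℝ)..1, g x :=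
    (integral_add_adjacent_intervals (hg.mono_set (uIcc_subset_uIcc (by simp) (by norm_num)))
      (hg.mono_set (uIcc_subset_uIcc (by norm_num) (by simp)))).symm
  have hleft : walshCoeff (fun y => f (y / 2)) (k / 2) = 2 * ∫ x in (0 : ℝ)..1 / 2, g x := by
    calc _ = ∫ y in (0 : ℝ)..1, g (y / 2) :=
          integral_congr_Ioo_of_le zero_le_one fun y hy => by
            simp only [g, walsh_div_two hy.1.le hy.2]
      _ = 2 * ∫ x in (0 : ℝ)..1 / 2, g x := by simp [integral_comp_div g two_ne_zero]
  have hright : (if k.testBit 0 then -1 else 1) * walshCoeff (fun y => f ((y + 1) / 2)) (k / 2)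
      = 2 * ∫ x in (1 / 2 : ℝ)..1, g x := by
    calc _ = ∫ y in (0 : ℝ)..1, g (y / 2 + 1 / 2) := by
          rw [walshCoeff, ← intervalIntegral.integral_const_mul]
          refine integral_congr_Ioo_of_le zero_le_one fun y hy => ?_
          simp only [g, ← add_div, walsh_add_one_div_two hk hy.1.le hy.2]
          ring
      _ = 2 * ∫ x in (1 / 2 : ℝ)..1, g x := by
          rw [integral_comp_div_add g two_ne_zero]
          norm_num
  rw [hsplit, hleft, hright]
  ring

lemma walshCoeff_const_mul (c : ℝ) (f : ℝ → ℝ) (k : ℕ) :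
    walshCoeff (fun x => c * f x) k = c * walshCoeff f k := by
  simp only [walshCoeff, mul_assoc, intervalIntegral.integral_const_mul]

lemma walshCoeff_exp_eq_of_ne_zero (u : ℝ) {k : ℕ} (hk : k ≠ 0) :
    walshCoeff (fun x => Real.exp (-u * x)) k =
      (1 + (if k.testBit 0 then -1 else 1) * Real.exp (-(u / 2))) / 2 *
        walshCoeff (fun x => Real.exp (-(u / 2) * x)) (k / 2) := by
  have hf : IntervalIntegrable (fun x => Real.exp (-u * x)) volume 0 1 := by
    apply Continuous.intervalIntegrable
    fun_prop
  have hleft : (fun y => Real.exp (-u * (y / 2))) = fun y => Real.exp (-(u / 2) * y) := by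
    ext y
    ring_nf
  have hright : (fun y => Real.exp (-u * ((y + 1) / 2))) =
      fun y => Real.exp (-(u / 2)) * Real.exp (-(u / 2) * y) := by
    ext y
    rw [← Real.exp_add]
    ring_nf
  rw [walshCoeff_eq_of_ne_zero hf hk, hleft, hright, walshCoeff_const_mul]
  ring

/-- For `u > 0` and `g_u(x) = exp (-u x)`, every Walsh coefficient
`ĝ_u(k) = ∫_0^1 exp (-u x) wal_k(x) dx` is strictly positive. -/
theorem walshCoeff_exp_pos (u : ℝ) (hu : 0 < u) (k : ℕ) :
    0 < walshCoeff (fun x => Real.exp (-u * x)) k := by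
  induction k using Nat.strong_induction_on generalizing u with
  | _ k ih =>
    rcases eq_or_ne k 0 with rfl | hk
    · simp only [walshCoeff, walsh_zero, mul_one]
      exact intervalIntegral_pos_of_pos (by apply Continuous.intervalIntegrable; fun_prop)
        (fun x => Real.exp_pos _) zero_lt_one
    have hexp : Real.exp (-(u / 2)) < 1 := Real.exp_lt_one_iff.2 (by linarith)
    have hfactor : 0 < 1 + (if k.testBit 0 then -1 else 1) * Real.exp (-(u / 2)) := by
      split_ifs <;> linarith [Real.exp_pos (-(u / 2))]
    rw [walshCoeff_exp_eq_of_ne_zero u hk]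
    exact mul_pos (half_pos hfactor) (ih (k / 2) (Nat.div_lt_self (Nat.pos_of_ne_zero hk)
      one_lt_two) (u / 2) (half_pos hu))
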